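/- (Theorem 1: soundness and completeness of the model-predictive monitor) For any prefix x_{0:k} ∈ 𝒳^{k+1} with k ≤ T, the prefix is feasible (there exists u_{k:T-1} ∈ 𝒰^{T-k} with x_{0:k} ξ_f(x_k, u_{k:T-1}) ⊨ Φ) if and only if x_k ∈ X_k^{I(x_{0:k-1})}; equivalently, the prefix is violated (for every u_{k:T-1} ∈ 𝒰^{T-k}, x_{0:k} ξ_f(x_k, u_{k:T-1}) ⊭ Φ) if and only if x_k ∉ X_k^{I(x_{0:k-1})}. Hence the online monitor that, at each step k, outputs vio if x_k ∉ X_k^{I(x_{0:k-1})} and feas otherwise, issues no false alarms and no missed alarms. -/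
import Mathlib


namespace STLMon

/-- Three-valued satisfaction status: violated `0`, satisfied `1`, uncertain `?`. -/
inductive SatVal : Type
  | zero : SatVal
  | one : SatVal
  | unk : SatVal
deriving DecidableEq

/-- Direction to a child in the syntax tree (`left` is also used for only-children). -/
inductive Dir : Type
  | left : Dir
  | right : Dir
deriving DecidableEq

/-- STL fragment (3): `Φ ::= G_{[a,b]} Φ | Φ₁ U'_{[a,b]} Φ₂ | Φ₁ ∧ Φ₂ | x ∈ ℋ`. -/
inductive Frag (X : Type) : Type
  | reg : Set X → Frag X
  | conj : Frag X → Frag X → Frag X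
  | glob : ℕ → ℕ → Frag X → Frag X
  | untl : ℕ → ℕ → Frag X → Frag X → Frag X

namespace Frag

variable {X : Type}

/-- Semantics of the fragment: `fsat Φ x k` means `(x,k) ⊨ Φ`. -/
def fsat : Frag X → (ℕ → X) → ℕ → Prop
  | reg H, x, k => x k ∈ H
  | conj φ ψ, x, k => fsat φ x k ∧ fsat ψ x k
  | glob a b φ, x, k => ∀ k', k + a ≤ k' → k' ≤ k + b → fsat φ x k'
  | untl a b φ ψ, x, k =>
      ∃ k', k + a ≤ k' ∧ k' ≤ k + b ∧ fsat ψ x k' ∧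
        ∀ k'', k + a ≤ k'' → k'' ≤ k' → fsat φ x k''

/-- A node of the syntax tree of `Φ` is a path (list of directions) from the root;
`subAt Φ p` is the subformula `Φ^v` rooted at the node `v` with path `p`, if it exists. -/
def subAt : Frag X → List Dir → Option (Frag X)
  | φ, [] => some φ
  | conj φ _, Dir.left :: p => subAt φ p
  | conj _ ψ, Dir.right :: p => subAt ψ p
  | glob _ _ φ, Dir.left :: p => subAt φ p
  | untl _ _ φ _, Dir.left :: p => subAt φ p
  | untl _ _ _ ψ, Dir.right :: p => subAt ψ p
  | _, _ => none

/-- Left endpoint `int^v` of the evaluation horizon of node `v`: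
the sum of `a^{v'}` over all (strict) ancestors `v'` of `v`. -/
def intOf : Frag X → List Dir → ℕ
  | _, [] => 0
  | conj φ _, Dir.left :: p => intOf φ p
  | conj _ ψ, Dir.right :: p => intOf ψ p
  | glob a _ φ, Dir.left :: p => a + intOf φ p
  | untl a _ φ _, Dir.left :: p => a + intOf φ p
  | untl a _ _ ψ, Dir.right :: p => a + intOf ψ p
  | _, _ => 0

/-- Right endpoint `end^v` of the evaluation horizon of node `v`:
the sum of `b^{v'}` over all (strict) ancestors `v'` of `v`. -/
def endOf : Frag X → List Dir → ℕ
  | _, [] => 0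
  | conj φ _, Dir.left :: p => endOf φ p
  | conj _ ψ, Dir.right :: p => endOf ψ p
  | glob _ b φ, Dir.left :: p => b + endOf φ p
  | untl _ b φ _, Dir.left :: p => b + endOf φ p
  | untl _ b _ ψ, Dir.right :: p => b + endOf ψ p
  | _, _ => 0

/-- `p` is an `ℋ`-node (a predicate leaf) of the syntax tree of `Φ`. -/
def IsHNode (Φ : Frag X) (p : List Dir) : Prop :=
  ∃ H : Set X, subAt Φ p = some (reg H)

/-- The satisfaction region `ℋ^v` attached to the `ℋ`-node at path `p`. -/
def regionAt (Φ : Frag X) (p : List Dir) : Set X :=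
  match subAt Φ p with
  | some (reg H) => H
  | _ => ∅

/-- `(p, t)` is a meaningful entry of a basic set: `p` is an `ℋ`-node and
`t` lies in its evaluation horizon `[int^p, end^p]`. -/
def Relevant (Φ : Frag X) (p : List Dir) (t : ℕ) : Prop :=
  IsHNode Φ p ∧ intOf Φ p ≤ t ∧ t ≤ endOf Φ p

/-- A basic set of satisfaction vectors: one three-valued entry for each `ℋ`-node
and each instant of its evaluation horizon. -/
def BasicSet (Φ : Frag X) : Type := ∀ p t, Relevant Φ p t → SatVal

/-- The entry of a basic set, totalized by `?` outside the relevant positions. -/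
noncomputable def val (Φ : Frag X) (I : BasicSet Φ) (p : List Dir) (t : ℕ) : SatVal :=
  @dite _ (Relevant Φ p t) (Classical.dec _) (fun h => I p t h) (fun _ => SatVal.unk)

open Classical in
/-- Induced satisfaction vectors (Definition 5): `ind β φ p t` is the induced value
`ι^v[t]` of the node `v` at path `p` carrying subformula `φ`, computed bottom-up from
the values `β` of the `ℋ`-node leaves. -/
noncomputable def ind (β : List Dir → ℕ → SatVal) : Frag X → List Dir → ℕ → SatVal
  | reg _, p, t => β p t
  | conj φ ψ, p, t =>
      if ind β φ (p ++ [Dir.left]) t = SatVal.zero ∨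
         ind β ψ (p ++ [Dir.right]) t = SatVal.zero then SatVal.zero
      else if ind β φ (p ++ [Dir.left]) t = SatVal.one ∧
              ind β ψ (p ++ [Dir.right]) t = SatVal.one then SatVal.one
      else SatVal.unk
  | glob a b φ, p, t =>
      if ∃ t', a ≤ t' ∧ t' ≤ b ∧ ind β φ (p ++ [Dir.left]) (t + t') = SatVal.zero then
        SatVal.zero
      else if ∀ t', a ≤ t' → t' ≤ b → ind β φ (p ++ [Dir.left]) (t + t') = SatVal.one then
        SatVal.one
      else SatVal.unk
  | untl a b φ ψ, p, t =>
      if (∀ t', a ≤ t' → t' ≤ b → ind β ψ (p ++ [Dir.right]) (t + t') = SatVal.zero) ∨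
         (∀ t', a ≤ t' → t' ≤ b → ind β ψ (p ++ [Dir.right]) (t + t') = SatVal.one →
            ∃ t'', a ≤ t'' ∧ t'' ≤ t' ∧ ind β φ (p ++ [Dir.left]) (t + t'') = SatVal.zero) then
        SatVal.zero
      else if ∃ t', a ≤ t' ∧ t' ≤ b ∧ ind β ψ (p ++ [Dir.right]) (t + t') = SatVal.one ∧
              ∀ t'', a ≤ t'' → t'' ≤ t' → ind β φ (p ++ [Dir.left]) (t + t'') = SatVal.one then
        SatVal.one
      else SatVal.unk

open Classical in
/-- Online update of a basic set upon observing state `xk` at instant `k`: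
in each `ℋ`-node vector whose horizon contains `k`, only the entry at position `k`
is changed, to `1` if `xk ∈ ℋ^{v_i}` and to `0` otherwise. -/
noncomputable def updateB (Φ : Frag X) (I : BasicSet Φ) (k : ℕ) (xk : X) : BasicSet Φ :=
  fun p t h =>
    if t = k then (if xk ∈ regionAt Φ p then SatVal.one else SatVal.zero) else I p t h

/-- The initial basic set `I₀`: every entry is `?`. -/
def initB (Φ : Frag X) : BasicSet Φ := fun _ _ _ => SatVal.unk

/-- `basicOf Φ x k` is `I(x_{0:k-1})`, obtained from `I₀` by successive updates
with `x 0, …, x (k-1)`. -/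
noncomputable def basicOf (Φ : Frag X) (x : ℕ → X) : ℕ → BasicSet Φ
  | 0 => initB Φ
  | k + 1 => updateB Φ (basicOf Φ x k) k (x k)

/-- Membership in `𝓘_k`: entries are `?` exactly at positions `t ≥ k`. -/
def InFam (Φ : Frag X) (I : BasicSet Φ) (k : ℕ) : Prop :=
  ∀ p t (h : Relevant Φ p t), (I p t h = SatVal.unk ↔ k ≤ t)

/-- The induced root satisfaction value `ι^root_I[0]` of a basic set `I`. -/
noncomputable def rootVal (Φ : Frag X) (I : BasicSet Φ) : SatVal :=
  ind (val Φ I) Φ [] 0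

/-- `Is ∈ succ(I, k)`: `I ∈ 𝕀_k`, `Is ∈ 𝕀_{k+1}`, and `Is` agrees with `I`
on every `ℋ`-node entry at positions `t ∈ [int^v, min(k-1, end^v)]`. -/
def Succ (Φ : Frag X) (k : ℕ) (I Is : BasicSet Φ) : Prop :=
  InFam Φ I k ∧ rootVal Φ I ≠ SatVal.zero ∧
  InFam Φ Is (k + 1) ∧ rootVal Φ Is ≠ SatVal.zero ∧
  ∀ p t (h : Relevant Φ p t), t < k → I p t h = Is p t h

/-- The consistent region `H_k(I, I_s) = ⋂ᵢ H_{i,k}`, where `H_{i,k}` is `ℋ^{v_i}` if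
`ι_s^{v_i}[k] = 1`, the complement of `ℋ^{v_i}` if `ι_s^{v_i}[k] = 0`, and `𝒳` if `k`
is outside the horizon of `v_i`. -/
def consReg (Φ : Frag X) (Is : BasicSet Φ) (k : ℕ) : Set X :=
  {x | ∀ p (h : Relevant Φ p k),
        (Is p k h = SatVal.zero → x ∉ regionAt Φ p) ∧
        (Is p k h = SatVal.one → x ∈ regionAt Φ p)}

end Frag

/-- Trajectory of the control system `x_{k+1} = f(x_k, u_k)`:
`traj f x u n` is the state after `n` steps from `x` under inputs `u`. -/
def traj {X U : Type} (f : X → U → X) (x : X) (u : ℕ → U) : ℕ → X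
  | 0 => x
  | n + 1 => f (traj f x u n) (u n)

/-- The signal obtained from the prefix `xpre` on positions `0, …, k-1` followed by the
state `xk` at position `k` and the trajectory `ξ_f(xk, u)` afterwards. -/
def runFrom {X U : Type} (f : X → U → X) (k : ℕ) (xpre : ℕ → X) (xk : X) (u : ℕ → U) :
    ℕ → X :=
  fun n => if n < k then xpre n else traj f xk u (n - k)

/-- One-step feasible set `Υ(S) = {x | ∃ u ∈ 𝒰, f(x,u) ∈ S}`. -/
def oneStep {X U : Type} (f : X → U → X) (S : Set X) : Set X :=
  {x | ∃ u : U, f x u ∈ S}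

/-- The `I`-determined feasible set `X_k^I`: states `xk` from which some control makes the
signal, consisting of some prefix consistent with `I` followed by `xk` and the resulting
trajectory, satisfy `Φ`. -/
noncomputable def feasSet {X U : Type} (Φ : Frag X) (f : X → U → X) (k : ℕ)
    (I : Frag.BasicSet Φ) : Set X :=
  {xk | ∃ xpre : ℕ → X, Frag.basicOf Φ xpre k = I ∧
          ∃ u : ℕ → U, Frag.fsat Φ (runFrom f k xpre xk u) 0}

end STLMon

namespace STLMon
namespace Frag

variable {X : Type}

@[simp] lemma subAt_nil (Φ : Frag X) : subAt Φ [] = some Φ := by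
  cases Φ <;> rfl

@[simp] lemma intOf_nil (Φ : Frag X) : intOf Φ [] = 0 := by cases Φ <;> rfl

@[simp] lemma endOf_nil (Φ : Frag X) : endOf Φ [] = 0 := by cases Φ <;> rfl

lemma subAt_append : ∀ (p : List Dir) (Φ : Frag X) (q : List Dir),
    subAt Φ (p ++ q) = (subAt Φ p).bind (fun ψ => subAt ψ q)
  | [], Φ, q => by rw [List.nil_append, subAt_nil]; rfl
  | d :: p, Frag.reg H, q => by cases d <;> rfl
  | Dir.left :: p, Frag.conj φ ψ, q => subAt_append p φ q
  | Dir.right :: p, Frag.conj φ ψ, q => subAt_append p ψ q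
  | Dir.left :: p, Frag.glob a b φ, q => subAt_append p φ q
  | Dir.right :: p, Frag.glob a b φ, q => rfl
  | Dir.left :: p, Frag.untl a b φ ψ, q => subAt_append p φ q
  | Dir.right :: p, Frag.untl a b φ ψ, q => subAt_append p ψ q

lemma intOf_append : ∀ (p : List Dir) (Φ φ : Frag X), subAt Φ p = some φ →
    ∀ q, intOf Φ (p ++ q) = intOf Φ p + intOf φ q
  | [], Φ, φ, h, q => by
      simp [subAt] at h; subst h; simp [intOf]
  | d :: p, Frag.reg H, φ, h, q => by cases d <;> simp [subAt] at h
  | Dir.left :: p, Frag.conj φ₁ φ₂, φ, h, q => intOf_append p φ₁ φ h q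
  | Dir.right :: p, Frag.conj φ₁ φ₂, φ, h, q => intOf_append p φ₂ φ h q
  | Dir.left :: p, Frag.glob a b φ₁, φ, h, q => by
      show _ + intOf φ₁ (p ++ q) = _
      rw [intOf_append p φ₁ φ h q]; show _ = _ + intOf φ₁ p + _; omega
  | Dir.right :: p, Frag.glob a b φ₁, φ, h, q => by simp [subAt] at h
  | Dir.left :: p, Frag.untl a b φ₁ φ₂, φ, h, q => by
      show _ + intOf φ₁ (p ++ q) = _
      rw [intOf_append p φ₁ φ h q]; show _ = _ + intOf φ₁ p + _; omega
  | Dir.right :: p, Frag.untl a b φ₁ φ₂, φ, h, q => by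
      show _ + intOf φ₂ (p ++ q) = _
      rw [intOf_append p φ₂ φ h q]; show _ = _ + intOf φ₂ p + _; omega

lemma endOf_append : ∀ (p : List Dir) (Φ φ : Frag X), subAt Φ p = some φ →
    ∀ q, endOf Φ (p ++ q) = endOf Φ p + endOf φ q
  | [], Φ, φ, h, q => by
      simp [subAt] at h; subst h; simp [endOf]
  | d :: p, Frag.reg H, φ, h, q => by cases d <;> simp [subAt] at h
  | Dir.left :: p, Frag.conj φ₁ φ₂, φ, h, q => endOf_append p φ₁ φ h q
  | Dir.right :: p, Frag.conj φ₁ φ₂, φ, h, q => endOf_append p φ₂ φ h q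
  | Dir.left :: p, Frag.glob a b φ₁, φ, h, q => by
      show _ + endOf φ₁ (p ++ q) = _
      rw [endOf_append p φ₁ φ h q]; show _ = _ + endOf φ₁ p + _; omega
  | Dir.right :: p, Frag.glob a b φ₁, φ, h, q => by simp [subAt] at h
  | Dir.left :: p, Frag.untl a b φ₁ φ₂, φ, h, q => by
      show _ + endOf φ₁ (p ++ q) = _
      rw [endOf_append p φ₁ φ h q]; show _ = _ + endOf φ₁ p + _; omega
  | Dir.right :: p, Frag.untl a b φ₁ φ₂, φ, h, q => by
      show _ + endOf φ₂ (p ++ q) = _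
      rw [endOf_append p φ₂ φ h q]; show _ = _ + endOf φ₂ p + _; omega

/-- Satisfaction congruence: `fsat` only depends on the suffix of the signal from `k`
and on the region memberships at relevant positions before `k`. -/
lemma fsat_congr (Φ : Frag X) (y z : ℕ → X) (k : ℕ)
    (hsuf : ∀ n, k ≤ n → y n = z n)
    (hmem : ∀ p t, Relevant Φ p t → t < k →
      (y t ∈ regionAt Φ p ↔ z t ∈ regionAt Φ p)) :
    ∀ (φ : Frag X) (p : List Dir) (j : ℕ), subAt Φ p = some φ →
      intOf Φ p ≤ j → j ≤ endOf Φ p → (fsat φ y j ↔ fsat φ z j) := by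
  intro φ
  induction φ with
  | reg H =>
      intro p j hsub hint hend
      simp only [fsat]
      rcases lt_or_ge j k with hjk | hjk
      · have hrel : Relevant Φ p j := ⟨⟨H, hsub⟩, hint, hend⟩
        have hreg : regionAt Φ p = H := by simp [regionAt, hsub]
        have := hmem p j hrel hjk
        rwa [hreg] at this
      · rw [hsuf j hjk]
  | conj φ ψ ihφ ihψ =>
      intro p j hsub hint hend
      have hsl : subAt Φ (p ++ [Dir.left]) = some φ := by
        rw [subAt_append, hsub]; simp [subAt]
      have hsr : subAt Φ (p ++ [Dir.right]) = some ψ := by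
        rw [subAt_append, hsub]; simp [subAt]
      have hil : intOf Φ (p ++ [Dir.left]) = intOf Φ p := by
        rw [intOf_append p Φ _ hsub]; simp [intOf]
      have hir : intOf Φ (p ++ [Dir.right]) = intOf Φ p := by
        rw [intOf_append p Φ _ hsub]; simp [intOf]
      have hel : endOf Φ (p ++ [Dir.left]) = endOf Φ p := by
        rw [endOf_append p Φ _ hsub]; simp [endOf]
      have her : endOf Φ (p ++ [Dir.right]) = endOf Φ p := by
        rw [endOf_append p Φ _ hsub]; simp [endOf]
      simp only [fsat]
      exact and_congr (ihφ _ j hsl (by omega) (by omega))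
        (ihψ _ j hsr (by omega) (by omega))
  | glob a b φ ihφ =>
      intro p j hsub hint hend
      have hsl : subAt Φ (p ++ [Dir.left]) = some φ := by
        rw [subAt_append, hsub]; simp [subAt]
      have hil : intOf Φ (p ++ [Dir.left]) = intOf Φ p + a := by
        rw [intOf_append p Φ _ hsub]; simp [intOf]
      have hel : endOf Φ (p ++ [Dir.left]) = endOf Φ p + b := by
        rw [endOf_append p Φ _ hsub]; simp [endOf]
      simp only [fsat]
      exact forall_congr' fun k' =>
        imp_congr_right fun h1 => imp_congr_right fun h2 =>
          ihφ _ k' hsl (by omega) (by omega)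
  | untl a b φ ψ ihφ ihψ =>
      intro p j hsub hint hend
      have hsl : subAt Φ (p ++ [Dir.left]) = some φ := by
        rw [subAt_append, hsub]; simp [subAt]
      have hsr : subAt Φ (p ++ [Dir.right]) = some ψ := by
        rw [subAt_append, hsub]; simp [subAt]
      have hil : intOf Φ (p ++ [Dir.left]) = intOf Φ p + a := by
        rw [intOf_append p Φ _ hsub]; simp [intOf]
      have hir : intOf Φ (p ++ [Dir.right]) = intOf Φ p + a := by
        rw [intOf_append p Φ _ hsub]; simp [intOf]
      have hel : endOf Φ (p ++ [Dir.left]) = endOf Φ p + b := by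
        rw [endOf_append p Φ _ hsub]; simp [endOf]
      have her : endOf Φ (p ++ [Dir.right]) = endOf Φ p + b := by
        rw [endOf_append p Φ _ hsub]; simp [endOf]
      simp only [fsat]
      refine exists_congr fun k' => and_congr_right fun h1 =>
        and_congr_right fun h2 => and_congr
          (ihψ _ k' hsr (by omega) (by omega)) ?_
      exact forall_congr' fun k'' =>
        imp_congr_right fun g1 => imp_congr_right fun g2 =>
          ihφ _ k'' hsl (by omega) (by omega)

open Classical in
/-- The entries of `basicOf Φ w k` at past positions record region membership. -/
lemma basicOf_lt (Φ : Frag X) (w : ℕ → X) :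
    ∀ (k : ℕ) (p : List Dir) (t : ℕ) (h : Relevant Φ p t), t < k →
      basicOf Φ w k p t h =
        (if w t ∈ regionAt Φ p then SatVal.one else SatVal.zero)
  | 0, p, t, h, ht => absurd ht (Nat.not_lt_zero t)
  | k + 1, p, t, h, ht => by
      show updateB Φ (basicOf Φ w k) k (w k) p t h = _
      unfold updateB
      by_cases htk : t = k
      · subst htk; rw [if_pos rfl]
      · rw [if_neg htk]
        exact basicOf_lt Φ w k p t h (by omega)

end Frag
end STLMon

open STLMon STLMon.Frag

/-- (Theorem 1: soundness and completeness of the model-predictive monitor) For any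
prefix `x_{0:k}` with `k ≤ T` (the horizon `T` exceeding the evaluation horizon of `Φ`):
the prefix is feasible (some control input sequence makes `x_{0:k} ξ_f(x_k, u) ⊨ Φ`) iff
`x_k ∈ X_k^{I(x_{0:k-1})}`; equivalently, the prefix is violated (every control input
sequence gives `x_{0:k} ξ_f(x_k, u) ⊭ Φ`) iff `x_k ∉ X_k^{I(x_{0:k-1})}`. Hence the
monitor that outputs `vio` when `x_k ∉ X_k^{I(x_{0:k-1})}` and `feas` otherwise issues no
false alarms and no missed alarms. -/
theorem monitor_sound_complete {X U : Type} [Nonempty U]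
    (Φ : Frag X) (f : X → U → X) (T : ℕ)
    (hT : ∀ p, IsHNode Φ p → endOf Φ p ≤ T)
    (k : ℕ) (hk : k ≤ T) (x : ℕ → X) :
    ((∃ u : ℕ → U, fsat Φ (runFrom f k x (x k) u) 0) ↔
        x k ∈ feasSet Φ f k (basicOf Φ x k)) ∧
    ((∀ u : ℕ → U, ¬ fsat Φ (runFrom f k x (x k) u) 0) ↔
        x k ∉ feasSet Φ f k (basicOf Φ x k)) := by
  have main : (∃ u : ℕ → U, fsat Φ (runFrom f k x (x k) u) 0) ↔
      x k ∈ feasSet Φ f k (basicOf Φ x k) := by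
    constructor
    · rintro ⟨u, hu⟩
      exact ⟨x, rfl, u, hu⟩
    · rintro ⟨xpre, hbasic, u, hu⟩
      refine ⟨u, ?_⟩
      have hsuf : ∀ n, k ≤ n → runFrom f k xpre (x k) u n = runFrom f k x (x k) u n := by
        intro n hn
        simp [runFrom, Nat.not_lt.mpr hn]
      have hmem : ∀ p t, Relevant Φ p t → t < k →
          (runFrom f k xpre (x k) u t ∈ regionAt Φ p ↔
            runFrom f k x (x k) u t ∈ regionAt Φ p) := by
        intro p t h ht
        have h1 := basicOf_lt Φ xpre k p t h ht
        have h2 := basicOf_lt Φ x k p t h ht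
        rw [hbasic] at h1
        rw [h2] at h1
        simp only [runFrom, if_pos ht]
        by_cases hx : x t ∈ regionAt Φ p <;>
          by_cases hxp : xpre t ∈ regionAt Φ p <;>
          simp [hx, hxp] at h1 ⊢
      exact (fsat_congr Φ _ _ k hsuf hmem Φ [] 0 (subAt_nil Φ) (by rw [intOf_nil]) (by rw [endOf_nil])).mp hu
  refine ⟨main, ?_⟩
  rw [← main]
  push_neg
  rfl
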